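/- Let G = (V, E) be a finite simple graph, d a positive integer, and let ψ : V → ℝ^d be a random map such that the d·|V| coordinates {ψ(v)_i : v ∈ V, 1 ≤ i ≤ d} are independent and each is uniformly distributed on {−1/√d, +1/√d}. Fix nodes u, v ∈ V and assume every node in N(u) ∪ N(v) has degree at least 2 (so that log of its degree is positive). Define the random vectors u⃗ = Σ_{x ∈ N(u)} ψ(x)·√(1/log|N(x)|) and v⃗ = Σ_{y ∈ N(v)} ψ(y)·√(1/log|N(y)|). Then E[u⃗ · v⃗] = Σ_{x ∈ N(u) ∩ N(v)} 1/log|N(x)|, i.e., the expected dot product equals the Adamic–Adar index of the pair (u, v). -/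

import Mathlib

/-! The coordinates `ψ(x)ᵢ` are independent, centred and have second moment `1/d`, so
`E[ψ(x)ᵢ ψ(y)ᵢ] = δₓᵧ / d`. Expanding the dot product bilinearly, only the diagonal terms
`x = y ∈ N(u) ∩ N(v)` survive, each contributing `√(1/log|N(x)|)² / d`; the `d` coordinates
together give the Adamic–Adar index. -/

open MeasureTheory ProbabilityTheory

section TwoPoint

variable {Ω : Type*} [MeasurableSpace Ω] {μ : Measure Ω} {X : Ω → ℝ} {a : ℝ}

lemma ae_eq_or_eq_neg_of_measure_eq_half [IsProbabilityMeasure μ] (hX : Measurable X)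
    (ha : a ≠ 0)
    (hlaw : μ {ω | X ω = a} = 1 / 2 ∧ μ {ω | X ω = -a} = 1 / 2) :
    ∀ᵐ ω ∂μ, X ω = a ∨ X ω = -a := by
  have hdisj : Disjoint {ω | X ω = a} {ω | X ω = -a} :=
    Set.disjoint_left.mpr fun ω h h' => ha (by linarith [h.symm.trans h'])
  rw [ae_iff_prob_eq_one (hX.eq_const a |>.or (hX.eq_const (-a))), Set.ofPred_or,
    measure_union hdisj (measurableSet_eq_fun hX measurable_const), hlaw.1, hlaw.2,
    ENNReal.add_halves]

lemma integral_eq_zero_of_measure_eq_half [IsProbabilityMeasure μ] (hX : Measurable X)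
    (ha : a ≠ 0)
    (hlaw : μ {ω | X ω = a} = 1 / 2 ∧ μ {ω | X ω = -a} = 1 / 2) :
    ∫ ω, X ω ∂μ = 0 := by
  set A := {ω | X ω = a}
  set B := {ω | X ω = -a}
  have hA : MeasurableSet A := measurableSet_eq_fun hX measurable_const
  have hB : MeasurableSet B := measurableSet_eq_fun hX measurable_const
  have hsplit :
      X =ᵐ[μ] fun ω => A.indicator (fun _ => a) ω + B.indicator (fun _ => -a) ω := by
    filter_upwards [ae_eq_or_eq_neg_of_measure_eq_half hX ha hlaw] with ω hω
    have : a ≠ -a := fun h => ha (by linarith)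
    rcases hω with hω | hω <;> simp [A, B, hω, this, this.symm]
  rw [integral_congr_ae hsplit, integral_add ((integrable_const a).indicator hA)
    ((integrable_const (-a)).indicator hB), integral_indicator_const _ hA,
    integral_indicator_const _ hB, measureReal_def, measureReal_def, hlaw.1, hlaw.2]
  simp

lemma integral_mul_self_of_ae_eq_or_eq_neg [IsProbabilityMeasure μ]
    (h : ∀ᵐ ω ∂μ, X ω = a ∨ X ω = -a) :
    ∫ ω, X ω * X ω ∂μ = a * a := by
  rw [integral_congr_ae (g := fun _ => a * a) (h.mono fun ω hω => by
    rcases hω with hω | hω <;> simp [hω]), integral_const, probReal_univ, one_smul]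

lemma integrable_mul_of_ae_eq_or_eq_neg [IsFiniteMeasure μ] {Y : Ω → ℝ} {b : ℝ}
    (hX : Measurable X) (hY : Measurable Y) (hXa : ∀ᵐ ω ∂μ, X ω = a ∨ X ω = -a)
    (hYb : ∀ᵐ ω ∂μ, Y ω = b ∨ Y ω = -b) :
    Integrable (fun ω => X ω * Y ω) μ := by
  refine .of_bound (hX.mul hY).aestronglyMeasurable (|a| * |b|) ?_
  filter_upwards [hXa, hYb] with ω hω hω'
  rcases hω with hω | hω <;> rcases hω' with hω' | hω' <;> simp [hω, hω']

end TwoPoint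

lemma integral_mul_eq_ite_of_iIndepFun {ι Ω : Type*} [MeasurableSpace Ω] {μ : Measure Ω}
    [IsProbabilityMeasure μ] [DecidableEq ι] {X : ι → Ω → ℝ} {a : ℝ}
    (hX : ∀ p, Measurable (X p)) (hindep : iIndepFun X μ) (ha : a ≠ 0)
    (hlaw : ∀ p, μ {ω | X p ω = a} = 1 / 2 ∧ μ {ω | X p ω = -a} = 1 / 2) (p q : ι) :
    ∫ ω, X p ω * X q ω ∂μ = if p = q then a * a else 0 := by
  split_ifs with hpq
  · subst hpq
    exact integral_mul_self_of_ae_eq_or_eq_neg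
      (ae_eq_or_eq_neg_of_measure_eq_half (hX p) ha (hlaw p))
  · have h := (hindep.indepFun hpq).integral_mul_eq_mul_integral
      (hX p).aestronglyMeasurable (hX q).aestronglyMeasurable
    simpa [integral_eq_zero_of_measure_eq_half (hX p) ha (hlaw p)] using h

lemma sum_mul_mul_sum_mul {R ι : Type*} [CommSemiring R] (s t : Finset ι) (x c e : ι → R) :
    (∑ p ∈ s, x p * c p) * (∑ q ∈ t, x q * e q)
      = ∑ p ∈ s, ∑ q ∈ t, c p * e q * (x p * x q) := by
  rw [Finset.sum_mul_sum]
  exact Finset.sum_congr rfl fun p _ => Finset.sum_congr rfl fun q _ => by ring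

section Bilinear

variable {ι Ω : Type*} [MeasurableSpace Ω] {μ : Measure Ω} {X : ι → Ω → ℝ}

lemma integrable_sum_mul_sum (hint : ∀ p q, Integrable (fun ω => X p ω * X q ω) μ)
    (s t : Finset ι) (c e : ι → ℝ) :
    Integrable (fun ω => (∑ p ∈ s, X p ω * c p) * (∑ q ∈ t, X q ω * e q)) μ := by
  simp_rw [sum_mul_mul_sum_mul]
  exact integrable_finsetSum _ fun p _ =>
    integrable_finsetSum _ fun q _ => (hint p q).const_mul _

lemma integral_sum_mul_sum_of_integral_mul_eq_ite [DecidableEq ι] {σ : ℝ}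
    (hint : ∀ p q, Integrable (fun ω => X p ω * X q ω) μ)
    (horth : ∀ p q, ∫ ω, X p ω * X q ω ∂μ = if p = q then σ else 0)
    (s t : Finset ι) (c e : ι → ℝ) :
    ∫ ω, (∑ p ∈ s, X p ω * c p) * (∑ q ∈ t, X q ω * e q) ∂μ
      = σ * ∑ p ∈ s ∩ t, c p * e p := by
  simp_rw [sum_mul_mul_sum_mul]
  rw [integral_finsetSum _ fun p _ =>
    integrable_finsetSum _ fun q _ => (hint p q).const_mul _]
  simp_rw [integral_finsetSum _ fun q _ => (hint _ q).const_mul _, integral_const_mul, horth,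
    mul_ite, mul_zero, Finset.sum_ite_eq, Finset.sum_ite_mem, Finset.mul_sum, mul_comm σ]

end Bilinear

theorem dothash_expected_dot_eq_adamic_adar_general
    {Ω : Type*} [MeasurableSpace Ω] (μ : Measure Ω) [IsProbabilityMeasure μ]
    {V : Type*} [Fintype V] [DecidableEq V]
    (G : SimpleGraph V) [DecidableRel G.Adj]
    (d : ℕ) (hd : 0 < d)
    (ψ : Ω → V → Fin d → ℝ)
    (hmeas : ∀ (s : V) (i : Fin d), Measurable fun ω => ψ ω s i)
    (hindep : iIndepFun
      (fun (p : V × Fin d) ω => ψ ω p.1 p.2) μ)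
    (hunif : ∀ (s : V) (i : Fin d),
      μ {ω | ψ ω s i = 1 / Real.sqrt d} = 1/2 ∧
      μ {ω | ψ ω s i = -(1 / Real.sqrt d)} = 1/2)
    (u v : V) :
    ∫ ω, ∑ i,
        (∑ x ∈ G.neighborFinset u, ψ ω x i * Real.sqrt (1 / Real.log (G.degree x)))
        * (∑ y ∈ G.neighborFinset v, ψ ω y i * Real.sqrt (1 / Real.log (G.degree y))) ∂μ
      = ∑ x ∈ G.neighborFinset u ∩ G.neighborFinset v, 1 / Real.log (G.degree x) := by
  set a := 1 / Real.sqrt d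
  have hd' : (d : ℝ) ≠ 0 := by positivity
  have ha : a ≠ 0 := by positivity
  have hX : ∀ p : V × Fin d, Measurable fun ω => ψ ω p.1 p.2 := fun p => hmeas p.1 p.2
  have hae (p : V × Fin d) := ae_eq_or_eq_neg_of_measure_eq_half (hX p) ha (hunif p.1 p.2)
  have hint (i : Fin d) (x y : V) : Integrable (fun ω => ψ ω x i * ψ ω y i) μ :=
    integrable_mul_of_ae_eq_or_eq_neg (hX (x, i)) (hX (y, i)) (hae (x, i)) (hae (y, i))
  have horth (i : Fin d) (x y : V) :
      ∫ ω, ψ ω x i * ψ ω y i ∂μ = if x = y then a * a else 0 := by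
    simpa using
      integral_mul_eq_ite_of_iIndepFun hX hindep ha (fun p => hunif p.1 p.2) (x, i) (y, i)
  have hweight (x : V) : √(1 / Real.log (G.degree x)) * √(1 / Real.log (G.degree x))
      = 1 / Real.log (G.degree x) :=
    Real.mul_self_sqrt (one_div_nonneg.mpr (Real.log_natCast_nonneg _))
  rw [integral_finsetSum _ fun i _ => integrable_sum_mul_sum (hint i) _ _ _ _]
  simp_rw [integral_sum_mul_sum_of_integral_mul_eq_ite (hint _) (horth _), hweight]
  rw [Finset.sum_const, Finset.card_univ, Fintype.card_fin, nsmul_eq_mul, ← mul_assoc,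
    div_mul_div_comm, one_mul, Real.mul_self_sqrt d.cast_nonneg, mul_one_div_cancel hd', one_mul]

/-- For a finite simple graph, if every neighbor of `u` or `v` has degree at
least 2, the expected dot product of the Adamic–Adar weighted DotHash sketches of `u` and `v`
equals the Adamic–Adar index `∑_{x ∈ N(u) ∩ N(v)} 1 / log |N(x)|`. -/
theorem dothash_expected_dot_eq_adamic_adar
    {Ω : Type*} [MeasurableSpace Ω] (μ : Measure Ω) [IsProbabilityMeasure μ]
    {V : Type*} [Fintype V] [DecidableEq V]
    (G : SimpleGraph V) [DecidableRel G.Adj]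
    (d : ℕ) (hd : 0 < d)
    (ψ : Ω → V → Fin d → ℝ)
    (hmeas : ∀ (s : V) (i : Fin d), Measurable fun ω => ψ ω s i)
    (hindep : iIndepFun
      (fun (p : V × Fin d) ω => ψ ω p.1 p.2) μ)
    (hunif : ∀ (s : V) (i : Fin d),
      μ {ω | ψ ω s i = 1 / Real.sqrt d} = 1/2 ∧
      μ {ω | ψ ω s i = -(1 / Real.sqrt d)} = 1/2)
    (u v : V)
    (hdeg : ∀ x ∈ G.neighborFinset u ∪ G.neighborFinset v, 2 ≤ G.degree x) :
    ∫ ω, ∑ i,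
        (∑ x ∈ G.neighborFinset u, ψ ω x i * Real.sqrt (1 / Real.log (G.degree x)))
        * (∑ y ∈ G.neighborFinset v, ψ ω y i * Real.sqrt (1 / Real.log (G.degree y))) ∂μ
      = ∑ x ∈ G.neighborFinset u ∩ G.neighborFinset v, 1 / Real.log (G.degree x) :=
  dothash_expected_dot_eq_adamic_adar_general μ G d hd ψ hmeas hindep hunif u v
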